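/- arXiv:1201.1375 — 4 statements merged into one kernel-verified Lean document; each statement's English description precedes it below -/
import Mathlib

section
/- Suppose there exist constants $\lambda>0$ and $C\ge 0$ such that $\pi_k\ge\lambda$ for all $k\in U$ and $n\,\max_{k\neq l}|\pi_{kl}-\pi_k\pi_l|\le C$, where $n>0$. Then for any real numbers $x_1,\dots,x_N$ with $|x_k|\le 1$ for all $k$, $\operatorname{Var}\big(N^{-1}\sum_{k\in U}(I_k/\pi_k)x_k\big) \le \frac{1-\lambda}{\lambda N} + \frac{C}{\lambda^2 n}$. -/
/-!
By bilinearity of the covariance, the variance of `∑ (I k / π k) * x k` is the quadratic form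
`∑ k, ∑ l, cov[I k, I l] * (x k / π k) * (x l / π l)`. Since `I k * I k = I k`, each of the `N`
diagonal terms equals `x k ^ 2 * (1 - π k) / π k ≤ (1 - lam) / lam`, and each of the fewer than
`N ^ 2` off-diagonal terms is at most `C / (lam ^ 2 * n)`; dividing by `N ^ 2` gives the bound.
-/

open MeasureTheory ProbabilityTheory

section

variable {Ω ι : Type*} [MeasurableSpace Ω] {μ : Measure Ω} [Fintype ι]

lemma variance_fun_sum_mul_const [IsFiniteMeasure μ] {Y : ι → Ω → ℝ}
    (hY : ∀ k, MemLp (Y k) 2 μ) (c : ι → ℝ) :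
    Var[fun ω ↦ ∑ k, Y k ω * c k; μ] = ∑ k, ∑ l, cov[Y k, Y l; μ] * c k * c l := by
  rw [variance_fun_sum fun k ↦ (hY k).mul_const (c k)]
  simp only [covariance_mul_const_left, covariance_mul_const_right]

lemma integral_le_one_of_le_one [IsProbabilityMeasure μ] {I : Ω → ℝ}
    (hI : ∀ ω, I ω ≤ 1) (hint : Integrable I μ) : μ[I] ≤ 1 := by
  calc μ[I] ≤ ∫ _, (1 : ℝ) ∂μ := integral_mono hint (integrable_const 1) hI
    _ = 1 := by simp

lemma covariance_self_of_zero_or_one [IsProbabilityMeasure μ] {I : Ω → ℝ}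
    (hI : ∀ ω, I ω = 0 ∨ I ω = 1) (hL2 : MemLp I 2 μ) :
    cov[I, I; μ] = μ[I] * (1 - μ[I]) := by
  have hsq : I * I = I := funext fun ω ↦ by rcases hI ω with h | h <;> simp [h]
  rw [covariance_eq_sub hL2 hL2, hsq]
  ring

end

lemma sum_sum_le_of_diag_le_of_offDiag_le {ι : Type*} [Fintype ι] [DecidableEq ι]
    {f : ι → ι → ℝ} {d e : ℝ} (hdiag : ∀ k, f k k ≤ d) (hoff : ∀ k l, k ≠ l → f k l ≤ e)
    (he : 0 ≤ e) :
    ∑ k, ∑ l, f k l ≤ Fintype.card ι * d + Fintype.card ι ^ 2 * e := by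
  have hle : ∀ k l, f k l ≤ (if k = l then d else 0) + e := by
    intro k l
    by_cases hkl : k = l
    · subst hkl; simpa using (hdiag k).trans (le_add_of_nonneg_right he)
    · simpa [hkl] using hoff k l hkl
  calc ∑ k, ∑ l, f k l ≤ ∑ k, ∑ l, ((if k = l then d else 0) + e) :=
        Finset.sum_le_sum fun k _ ↦ Finset.sum_le_sum fun l _ ↦ hle k l
    _ = Fintype.card ι * d + Fintype.card ι ^ 2 * e := by
        simp only [Finset.sum_add_distrib, Finset.sum_ite_eq, Finset.mem_univ, ↓reduceIte,
          Finset.sum_const, Finset.card_univ, nsmul_eq_mul]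
        ring

lemma diag_term_le {p lam x : ℝ} (hlam : 0 < lam) (hp : lam ≤ p) (hp1 : p ≤ 1) (hx : |x| ≤ 1) :
    p * (1 - p) * (x / p) * (x / p) ≤ (1 - lam) / lam := by
  have hp0 : 0 < p := hlam.trans_le hp
  have hx2 : x ^ 2 ≤ 1 := by nlinarith [abs_nonneg x, sq_abs x]
  calc p * (1 - p) * (x / p) * (x / p) = x ^ 2 * (1 / p - 1) := by field_simp
    _ ≤ 1 * (1 / p - 1) := by
        gcongr
        rw [sub_nonneg, le_div_iff₀ hp0, one_mul]
        exact hp1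
    _ ≤ 1 / lam - 1 := by linarith [one_div_le_one_div_of_le hlam hp]
    _ = (1 - lam) / lam := by field_simp

lemma offDiag_term_le {d p q x y lam C n : ℝ} (hlam : 0 < lam) (hn : 0 < n)
    (hp : lam ≤ p) (hq : lam ≤ q) (hx : |x| ≤ 1) (hy : |y| ≤ 1) (hd : n * |d| ≤ C) :
    d * (x / p) * (y / q) ≤ C / (lam ^ 2 * n) := by
  have hp0 : 0 < p := hlam.trans_le hp
  have hq0 : 0 < q := hlam.trans_le hq
  calc d * (x / p) * (y / q) ≤ |d| * (|x| / p) * (|y| / q) := by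
        refine (le_abs_self _).trans_eq ?_
        rw [abs_mul, abs_mul, abs_div, abs_div, abs_of_pos hp0, abs_of_pos hq0]
    _ ≤ (C / n) * (1 / lam) * (1 / lam) := by
        have hdC : |d| ≤ C / n := by rw [le_div_iff₀ hn]; linarith
        have hC : 0 ≤ C / n := (abs_nonneg d).trans hdC
        gcongr
    _ = C / (lam ^ 2 * n) := by field_simp

theorem stmt2_general {Ω : Type*} [MeasurableSpace Ω] (μ : Measure Ω) [IsProbabilityMeasure μ]
    (N : ℕ) (I : Fin N → Ω → ℝ) (π : Fin N → ℝ) (πkl : Fin N → Fin N → ℝ)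
    (lam C n : ℝ) (hlam : 0 < lam) (hC : 0 ≤ C) (hn : 0 < n)
    (hind : ∀ k ω, I k ω = 0 ∨ I k ω = 1)
    (hL2 : ∀ k, MemLp (I k) 2 μ)
    (hE : ∀ k, ∫ ω, I k ω ∂μ = π k)
    (hE2 : ∀ k l, ∫ ω, I k ω * I l ω ∂μ = πkl k l)
    (hπlam : ∀ k, lam ≤ π k)
    (hΔ : ∀ k l, k ≠ l → n * |πkl k l - π k * π l| ≤ C)
    (x : Fin N → ℝ) (hx : ∀ k, |x k| ≤ 1) :
    variance (fun ω => (N : ℝ)⁻¹ * ∑ k, (I k ω / π k) * x k) μ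
      ≤ (1 - lam) / (lam * N) + C / (lam ^ 2 * n) := by
  have hdiag : ∀ k, cov[I k, I k; μ] = π k * (1 - π k) := fun k ↦ by
    rw [covariance_self_of_zero_or_one (hind k) (hL2 k), hE]
  have hoff : ∀ k l, cov[I k, I l; μ] = πkl k l - π k * π l := fun k l ↦ by
    rw [covariance_eq_sub (hL2 k) (hL2 l), ← hE, ← hE, ← hE2]
    rfl
  have hπ_le_one : ∀ k, π k ≤ 1 := fun k ↦
    hE k ▸ integral_le_one_of_le_one (fun ω ↦ (hind k ω).elim (fun h ↦ h ▸ zero_le_one) (·.le))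
      ((hL2 k).integrable one_le_two)
  have hvar : Var[fun ω ↦ ∑ k, I k ω / π k * x k; μ]
      ≤ N * ((1 - lam) / lam) + N ^ 2 * (C / (lam ^ 2 * n)) := by
    simp_rw [div_mul_eq_mul_div, mul_div_assoc]
    rw [variance_fun_sum_mul_const hL2]
    have hsum := sum_sum_le_of_diag_le_of_offDiag_le
      (f := fun k l ↦ cov[I k, I l; μ] * (x k / π k) * (x l / π l))
      (fun k ↦ (hdiag k).symm ▸ diag_term_le hlam (hπlam k) (hπ_le_one k) (hx k))
      (fun k l hkl ↦ (hoff k l).symm ▸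
        offDiag_term_le hlam hn (hπlam k) (hπlam l) (hx k) (hx l) (hΔ k l hkl))
      (by positivity)
    rwa [Fintype.card_fin] at hsum
  rw [variance_const_mul]
  rcases N.eq_zero_or_pos with rfl | hN
  · simpa using div_nonneg hC (by positivity : (0 : ℝ) ≤ lam ^ 2 * n)
  calc (N : ℝ)⁻¹ ^ 2 * Var[fun ω ↦ ∑ k, I k ω / π k * x k; μ]
      ≤ (N : ℝ)⁻¹ ^ 2 * (N * ((1 - lam) / lam) + N ^ 2 * (C / (lam ^ 2 * n))) := by gcongr
    _ = (1 - lam) / (lam * N) + C / (lam ^ 2 * n) := by field_simp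

/-- Variance bound for the normalized Horvitz–Thompson estimator of a bounded variable. -/
theorem stmt2 {Ω : Type*} [MeasurableSpace Ω] (μ : Measure Ω) [IsProbabilityMeasure μ]
    (N : ℕ) (hN : 0 < N) (I : Fin N → Ω → ℝ) (π : Fin N → ℝ) (πkl : Fin N → Fin N → ℝ)
    (lam C n : ℝ) (hlam : 0 < lam) (hC : 0 ≤ C) (hn : 0 < n)
    (hind : ∀ k ω, I k ω = 0 ∨ I k ω = 1)
    (hL2 : ∀ k, MemLp (I k) 2 μ)
    (hE : ∀ k, ∫ ω, I k ω ∂μ = π k)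
    (hE2 : ∀ k l, ∫ ω, I k ω * I l ω ∂μ = πkl k l)
    (hπlam : ∀ k, lam ≤ π k)
    (hΔ : ∀ k l, k ≠ l → n * |πkl k l - π k * π l| ≤ C)
    (x : Fin N → ℝ) (hx : ∀ k, |x k| ≤ 1) :
    variance (fun ω => (N : ℝ)⁻¹ * ∑ k, (I k ω / π k) * x k) μ
      ≤ (1 - lam) / (lam * N) + C / (lam ^ 2 * n) :=
  stmt2_general μ N I π πkl lam C n hlam hC hn hind hL2 hE hE2 hπlam hΔ x hx
end

section
/- Let $\mathbf B_s$ be an $n\times q$ matrix, $\mathbf\Pi_s$ an $n\times n$ positive-definite diagonal matrix, and suppose the vector of ones satisfies $\mathbf 1_s = \mathbf B_s\mathbf 1_q$ and $\mathbf 1_U = \mathbf B_U \mathbf 1_q$ (partition of unity of the B-spline basis over sample and population). If $\mathbf B_s'\mathbf\Pi_s^{-1}\mathbf B_s$ is invertible, then the unpenalized weight vector $\mathbf w_s = \mathbf\Pi_s^{-1}\mathbf 1_s - \mathbf\Pi_s^{-1}\mathbf B_s(\mathbf B_s'\mathbf\Pi_s^{-1}\mathbf B_s)^{-1}(\mathbf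 B_s'\mathbf\Pi_s^{-1}\mathbf 1_s - \mathbf B_U'\mathbf 1_U)$ simplifies to $\mathbf w_s = \mathbf\Pi_s^{-1}\mathbf B_s(\mathbf B_s'\mathbf\Pi_s^{-1}\mathbf B_s)^{-1}\mathbf B_U'\mathbf 1_U$. -/
open Matrix

theorem mulVec_sub_gram_correction_of_mulVec_eq {R m n : Type*} [CommRing R] [Fintype m]
    [Fintype n] [DecidableEq n] (P : Matrix m m R) (B : Matrix m n R)
    {u : m → R} {v : n → R} (hBv : B *ᵥ v = u) (hG : IsUnit (Bᵀ * P * B).det) (c : n → R) :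
    P *ᵥ u - (P * B * (Bᵀ * P * B)⁻¹) *ᵥ (Bᵀ *ᵥ (P *ᵥ u) - c)
      = (P * B * (Bᵀ * P * B)⁻¹) *ᵥ c := by
  have hconstraint : Bᵀ *ᵥ (P *ᵥ u) = (Bᵀ * P * B) *ᵥ v := by
    rw [← hBv, mulVec_mulVec, mulVec_mulVec, Matrix.mul_assoc]
  rw [hconstraint, mulVec_sub, mulVec_mulVec, nonsing_inv_mul_cancel_right _ _ hG, ← mulVec_mulVec,
    hBv, sub_sub_cancel]

theorem stmt9_general {n q N : ℕ}
    (Bs : Matrix (Fin n) (Fin q) ℝ) (BU : Matrix (Fin N) (Fin q) ℝ)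
    (Ps : Matrix (Fin n) (Fin n) ℝ)
    (h1s : Bs.mulVec (fun _ => 1) = fun _ => 1)
    (hinv : IsUnit (Bsᵀ * Ps⁻¹ * Bs).det) :
    (Ps⁻¹.mulVec (fun _ => 1)
        - (Ps⁻¹ * Bs * (Bsᵀ * Ps⁻¹ * Bs)⁻¹).mulVec
            (Bsᵀ.mulVec (Ps⁻¹.mulVec (fun _ => 1)) - BUᵀ.mulVec (fun _ => 1)))
      = (Ps⁻¹ * Bs * (Bsᵀ * Ps⁻¹ * Bs)⁻¹ * BUᵀ).mulVec (fun _ => 1) := by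
  rw [mulVec_sub_gram_correction_of_mulVec_eq _ _ h1s hinv, mulVec_mulVec]

/-- Simplification of the unpenalized B-spline weights, using the partition of unity. -/
theorem stmt9 {n q N : ℕ}
    (Bs : Matrix (Fin n) (Fin q) ℝ) (BU : Matrix (Fin N) (Fin q) ℝ)
    (d : Fin n → ℝ) (hd : ∀ i, 0 < d i)
    (Ps : Matrix (Fin n) (Fin n) ℝ) (hPs : Ps = Matrix.diagonal d)
    (h1s : Bs.mulVec (fun _ => 1) = fun _ => 1)
    (h1U : BU.mulVec (fun _ => 1) = fun _ => 1)
    (hinv : IsUnit (Bsᵀ * Ps⁻¹ * Bs).det) :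
    (Ps⁻¹.mulVec (fun _ => 1)
        - (Ps⁻¹ * Bs * (Bsᵀ * Ps⁻¹ * Bs)⁻¹).mulVec
            (Bsᵀ.mulVec (Ps⁻¹.mulVec (fun _ => 1)) - BUᵀ.mulVec (fun _ => 1)))
      = (Ps⁻¹ * Bs * (Bsᵀ * Ps⁻¹ * Bs)⁻¹ * BUᵀ).mulVec (fun _ => 1) :=
  stmt9_general Bs BU Ps h1s hinv
end

section
/- Let $T$ be Fréchet differentiable at $P=M/N$ with linear derivative $T'(P;\cdot)$ with respect to a pseudometric $d$: $|T(Q)-T(P)-T'(P;Q-P)| = o(d(Q,P))$ as $d(Q,P)\to 0$. Suppose $T$ is homogeneous of degree $\alpha$ and $T'(P;\Delta)=\int IT(P,y)\,d\Delta(y)$ with $IT(M/N,y)=N^{1-\alpha}IT(M,y)$. If random measures $\widehat M_n$ satisfy $d(\widehat M_n/N, M/N)=O_p(n^{-1/2})$, then $N^{-\alpha}\big(T(\widehat M_n)-T(M)\big) = N^{-\alpha}\int IT(M,y)\,d(\widehat M_n - M)(y) + o_p(n^{-1/2})$. -/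
/-!
Homogeneity turns the Fréchet remainder of `T` at `N⁻¹ • M̂ₙ` around `P = N⁻¹ • M` into exactly
`N^{-α}` times the remainder of the claimed expansion of `T(M̂ₙ)` around `M`. By Fréchet
differentiability that remainder is `o(d(N⁻¹ • M̂ₙ, P))`, and a quantity that is `o` of an
`O_p(n^{-1/2})` quantity is `o_p(n^{-1/2})`.
-/

open MeasureTheory Filter Topology

section InProbability

variable {Ω : Type*} [MeasurableSpace Ω]

/-- `X n = O_p(r n)`; only the upper tail of `X n` is controlled. -/
def IsBigOInProb (μ : Measure Ω) (X : ℕ → Ω → ℝ) (r : ℕ → ℝ) : Prop :=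
  ∀ δ : ℝ, 0 < δ → ∃ C : ℝ, 0 < C ∧ ∀ n : ℕ, (μ {ω | C * r n < X n ω}).toReal ≤ δ

/-- `X n = o_p(r n)`. -/
def IsLittleOInProb (μ : Measure Ω) (X : ℕ → Ω → ℝ) (r : ℕ → ℝ) : Prop :=
  ∀ ε : ℝ, 0 < ε → Tendsto (fun n : ℕ => (μ {ω | ε * r n < |X n ω|}).toReal) atTop (𝓝 0)

theorem IsLittleOInProb.of_isBigOInProb {μ : Measure Ω} [IsFiniteMeasure μ]
    {X R : ℕ → Ω → ℝ} {r : ℕ → ℝ} (hX : IsBigOInProb μ X r) (hr : Tendsto r atTop (𝓝 0))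
    (hR : ∀ ε : ℝ, 0 < ε → ∃ δ : ℝ, 0 < δ ∧ ∀ n ω, X n ω < δ → |R n ω| ≤ ε * X n ω) :
    IsLittleOInProb μ R r := by
  intro ε hε
  refine tendsto_order.2 ⟨fun a ha => Eventually.of_forall fun n => ha.trans_le
    ENNReal.toReal_nonneg, fun a ha => ?_⟩
  obtain ⟨C, hC, hCbound⟩ := hX (a / 2) (half_pos ha)
  obtain ⟨δ, hδ, hδR⟩ := hR (ε / C) (div_pos hε hC)
  have hsmall : ∀ᶠ n in atTop, C * r n < δ := by
    have := hr.const_mul C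
    rw [mul_zero] at this
    exact this.eventually (gt_mem_nhds hδ)
  filter_upwards [hsmall] with n hn
  have hsub : {ω | ε * r n < |R n ω|} ⊆ {ω | C * r n < X n ω} := by
    intro ω
    show ε * r n < |R n ω| → C * r n < X n ω
    contrapose!
    intro hXn
    calc |R n ω| ≤ ε / C * X n ω := hδR n ω (hXn.trans_lt hn)
      _ ≤ ε / C * (C * r n) := by gcongr
      _ = ε * r n := by field_simp
  calc (μ {ω | ε * r n < |R n ω|}).toReal
      ≤ (μ {ω | C * r n < X n ω}).toReal :=
        ENNReal.toReal_mono (measure_ne_top μ _) (measure_mono hsub)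
    _ ≤ a / 2 := hCbound n
    _ < a := half_lt_self ha

end InProbability

noncomputable def linearizationRemainder (T : Measure ℝ → ℝ) (f : ℝ → ℝ) (P Q : Measure ℝ) :
    ℝ :=
  T Q - T P - ((∫ y, f y ∂Q) - ∫ y, f y ∂P)

theorem linearizationRemainder_smul {T : Measure ℝ → ℝ} {f g : ℝ → ℝ} {α c k : ℝ}
    (hc : 0 ≤ c) (hhom : ∀ ν, T (ENNReal.ofReal c • ν) = c ^ α * T ν)
    (hfg : ∀ y, f y = k * g y) (hk : c * k = c ^ α) (P Q : Measure ℝ) :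
    linearizationRemainder T f (ENNReal.ofReal c • P) (ENNReal.ofReal c • Q)
      = c ^ α * linearizationRemainder T g P Q := by
  have hint : ∀ ν : Measure ℝ, ∫ y, f y ∂(ENNReal.ofReal c • ν) = c ^ α * ∫ y, g y ∂ν := by
    intro ν
    simp_rw [integral_smul_measure, ENNReal.toReal_ofReal hc, hfg]
    rw [integral_const_mul, smul_eq_mul, ← mul_assoc, hk]
  simp only [linearizationRemainder, hhom, hint]
  ring

theorem tendsto_natCast_rpow_neg_half :
    Tendsto (fun n : ℕ => (n : ℝ) ^ (-(1 : ℝ) / 2)) atTop (𝓝 0) := by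
  have h := tendsto_rpow_neg_atTop (y := (1 : ℝ) / 2) one_half_pos
  rw [← neg_div] at h
  exact h.comp tendsto_natCast_atTop_atTop

theorem stmt17_general {Ω : Type*} [MeasurableSpace Ω] (μ : Measure Ω) [IsProbabilityMeasure μ]
    (T : Measure ℝ → ℝ) (d : Measure ℝ → Measure ℝ → ℝ)
    (IT : Measure ℝ → ℝ → ℝ) (α N : ℝ) (hN : 0 < N)
    (M : Measure ℝ)
    (hhom : ∀ r : ℝ, 0 < r → ∀ ν : Measure ℝ, T (ENNReal.ofReal r • ν) = r ^ α * T ν)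
    (hfrechet : ∀ ε : ℝ, 0 < ε → ∃ δ : ℝ, 0 < δ ∧ ∀ Q : Measure ℝ,
      d Q (ENNReal.ofReal N⁻¹ • M) < δ →
        |T Q - T (ENNReal.ofReal N⁻¹ • M)
            - ((∫ y, IT (ENNReal.ofReal N⁻¹ • M) y ∂Q)
                - ∫ y, IT (ENNReal.ofReal N⁻¹ • M) y ∂(ENNReal.ofReal N⁻¹ • M))|
          ≤ ε * d Q (ENNReal.ofReal N⁻¹ • M))
    (hIT : ∀ y, IT (ENNReal.ofReal N⁻¹ • M) y = N ^ ((1 : ℝ) - α) * IT M y)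
    (Mh : ℕ → Ω → Measure ℝ)
    (hOp : ∀ δ : ℝ, 0 < δ → ∃ C : ℝ, 0 < C ∧ ∀ n : ℕ,
      (μ {ω | C * (n : ℝ) ^ (-(1 : ℝ) / 2)
          < d (ENNReal.ofReal N⁻¹ • Mh n ω) (ENNReal.ofReal N⁻¹ • M)}).toReal ≤ δ) :
    ∀ ε : ℝ, 0 < ε →
      Tendsto (fun n : ℕ =>
          (μ {ω | ε * (n : ℝ) ^ (-(1 : ℝ) / 2)
              < |N ^ (-α) * (T (Mh n ω) - T M)
                  - N ^ (-α) * ((∫ y, IT M y ∂(Mh n ω)) - ∫ y, IT M y ∂M)|}).toReal)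
        atTop (nhds 0) := by
  have hpow : N⁻¹ ^ α = N ^ (-α) := by rw [Real.inv_rpow hN.le, Real.rpow_neg hN.le]
  have hk : N⁻¹ * N ^ (1 - α) = N⁻¹ ^ α := by
    rw [hpow, ← Real.rpow_neg_one N, ← Real.rpow_add hN]
    ring_nf
  have hrem (ν : Measure ℝ) :
      linearizationRemainder T (IT (ENNReal.ofReal N⁻¹ • M)) (ENNReal.ofReal N⁻¹ • M)
          (ENNReal.ofReal N⁻¹ • ν)
        = N ^ (-α) * linearizationRemainder T (IT M) M ν := by
    rw [linearizationRemainder_smul (inv_nonneg.2 hN.le) (hhom _ (inv_pos.2 hN)) hIT hk, hpow]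
  have hlin := IsLittleOInProb.of_isBigOInProb (R := fun n ω =>
      N ^ (-α) * linearizationRemainder T (IT M) M (Mh n ω)) hOp tendsto_natCast_rpow_neg_half
    fun ε hε => (hfrechet ε hε).imp fun δ ⟨hδ, h⟩ => ⟨hδ, fun n ω hd => hrem (Mh n ω) ▸ h _ hd⟩
  simpa only [IsLittleOInProb, linearizationRemainder, mul_sub] using hlin

/-- Abstract first linearization step: Fréchet differentiability with respect to a
pseudometric `d`, homogeneity of degree `α`, the scaling of the influence function, and
`d(M̂ₙ/N, M/N) = O_p(n^{-1/2})` imply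
`N^{-α}(T(M̂ₙ) - T(M)) = N^{-α} ∫ IT(M,y) d(M̂ₙ - M)(y) + o_p(n^{-1/2})`. -/
theorem stmt17 {Ω : Type*} [MeasurableSpace Ω] (μ : Measure Ω) [IsProbabilityMeasure μ]
    (T : Measure ℝ → ℝ) (d : Measure ℝ → Measure ℝ → ℝ)
    (IT : Measure ℝ → ℝ → ℝ) (α N : ℝ) (hα : 0 < α) (hN : 0 < N)
    (M : Measure ℝ)
    (hhom : ∀ r : ℝ, 0 < r → ∀ ν : Measure ℝ, T (ENNReal.ofReal r • ν) = r ^ α * T ν)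
    (hfrechet : ∀ ε : ℝ, 0 < ε → ∃ δ : ℝ, 0 < δ ∧ ∀ Q : Measure ℝ,
      d Q (ENNReal.ofReal N⁻¹ • M) < δ →
        |T Q - T (ENNReal.ofReal N⁻¹ • M)
            - ((∫ y, IT (ENNReal.ofReal N⁻¹ • M) y ∂Q)
                - ∫ y, IT (ENNReal.ofReal N⁻¹ • M) y ∂(ENNReal.ofReal N⁻¹ • M))|
          ≤ ε * d Q (ENNReal.ofReal N⁻¹ • M))
    (hIT : ∀ y, IT (ENNReal.ofReal N⁻¹ • M) y = N ^ ((1 : ℝ) - α) * IT M y)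
    (Mh : ℕ → Ω → Measure ℝ)
    (hOp : ∀ δ : ℝ, 0 < δ → ∃ C : ℝ, 0 < C ∧ ∀ n : ℕ,
      (μ {ω | C * (n : ℝ) ^ (-(1 : ℝ) / 2)
          < d (ENNReal.ofReal N⁻¹ • Mh n ω) (ENNReal.ofReal N⁻¹ • M)}).toReal ≤ δ) :
    ∀ ε : ℝ, 0 < ε →
      Tendsto (fun n : ℕ =>
          (μ {ω | ε * (n : ℝ) ^ (-(1 : ℝ) / 2)
              < |N ^ (-α) * (T (Mh n ω) - T M)
                  - N ^ (-α) * ((∫ y, IT M y ∂(Mh n ω)) - ∫ y, IT M y ∂M)|}).toReal)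
        atTop (nhds 0) :=
  stmt17_general μ T d IT α N hN M hhom hfrechet hIT Mh hOp
end

section
/- (Poststratification as order-1 B-splines.) Let $[0,1]$ be partitioned into intervals $J_1,\dots,J_q$ and let $B_j = \mathbf 1_{J_j}$ (B-splines of order $m=1$). Suppose each poststratum sample count $n_j = \#\{k\in s : z_k\in J_j\}$ is positive and $\mathbf\Pi_s = \pi\,\mathbf I$ (equal inclusion probabilities). Then the weights $\mathbf w_s = \mathbf\Pi_s^{-1}\mathbf B_s(\mathbf B_s'\mathbf\Pi_s^{-1}\mathbf B_s)^{-1}\mathbf B_U'\mathbf 1_U$ satisfy $w_{ks} = N_j/n_j$ for every sampled $k$ with $z_k\in J_j$, where $N_j=\#\{k\in U: z_k\in J_j\}$; hence $\sum_{k\in s}w_{ks}y_k = \sum_{j=1}^q (N_j/n_j)\sum_{k\in s: z_k\in J_j} y_k$ is the classical poststratified estimator. -/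
/-!
Equal inclusion probabilities cancel from the weights, leaving `w = B (B'B)⁻¹ B_U' 1`. Every
`z_k` lies in exactly one poststratum, so each row of the indicator design matrix has a single
`1`; hence `B'B = diag (n_j)`, `B_U' 1 = (N_j)`, and `w = B (N_j / n_j)_j` reads off `N_j / n_j`
on stratum `j`.
-/

open Finset Matrix

namespace Matrix

variable {m n K : Type*} [Fintype m] [DecidableEq m] [Fintype n] [DecidableEq n] [Field K]

theorem inv_smul_of_ne_zero {c : K} (hc : c ≠ 0) (A : Matrix n n K) : (c • A)⁻¹ = c⁻¹ • A⁻¹ := by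
  by_cases hA : IsUnit A.det
  · exact inv_smul' A (Units.mk0 c hc) hA
  · have hcA : ¬IsUnit (c • A).det := by
      simpa [det_smul, isUnit_iff_ne_zero, hc] using hA
    rw [nonsing_inv_apply_not_isUnit _ hA, nonsing_inv_apply_not_isUnit _ hcA, smul_zero]

theorem inv_diagonal_of_ne_zero {d : n → K} (hd : ∀ j, d j ≠ 0) :
    (diagonal d)⁻¹ = diagonal fun j => (d j)⁻¹ := by
  refine inv_eq_left_inv ?_
  rw [diagonal_mul_diagonal, ← diagonal_one]
  exact congrArg diagonal (funext fun j => inv_mul_cancel₀ (hd j))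

theorem inv_smul_one_mul_mul_inv_eq {c : K} (hc : c ≠ 0) (B : Matrix m n K) :
    (c • (1 : Matrix m m K))⁻¹ * B * (Bᵀ * (c • (1 : Matrix m m K))⁻¹ * B)⁻¹
      = B * (Bᵀ * B)⁻¹ := by
  have hgram : Bᵀ * (c⁻¹ • (1 : Matrix m m K)) * B = c⁻¹ • (Bᵀ * B) := by
    rw [Matrix.mul_smul, Matrix.mul_one, Matrix.smul_mul]
  rw [inv_smul_of_ne_zero hc, inv_one, hgram, inv_smul_of_ne_zero (inv_ne_zero hc), inv_inv,
    Matrix.smul_mul, Matrix.one_mul, Matrix.smul_mul, Matrix.mul_smul, smul_smul,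
    inv_mul_cancel₀ hc, one_smul]

end Matrix

variable {ι κ R : Type*}

def indicatorMatrix [Zero R] [One R] (P : ι → κ → Prop) [∀ k j, Decidable (P k j)] :
    Matrix ι κ R :=
  Matrix.of fun k j => if P k j then 1 else 0

section
variable [NonAssocSemiring R] (P : ι → κ → Prop) [∀ k j, Decidable (P k j)]

theorem indicatorMatrix_transpose_mulVec [Fintype ι] (y : ι → R) (j : κ) :
    ((indicatorMatrix P : Matrix ι κ R)ᵀ *ᵥ y) j = ∑ k, if P k j then y k else 0 := by
  simp only [mulVec, dotProduct, transpose_apply, indicatorMatrix, of_apply, ite_mul, one_mul,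
    zero_mul]

theorem sum_indicatorMatrix_mulVec_mul [Fintype ι] [Fintype κ] (v : κ → R) (y : ι → R) :
    ∑ k, (indicatorMatrix P *ᵥ v) k * y k = ∑ j, v j * ∑ k, if P k j then y k else 0 := by
  simp only [mulVec, dotProduct, indicatorMatrix, of_apply, ite_mul, one_mul, zero_mul,
    sum_mul, mul_sum, mul_ite, mul_zero]
  rw [sum_comm]

variable {P} (hP : ∀ k i j, P k i → P k j → i = j)
include hP

theorem indicatorMatrix_mulVec_of [Fintype κ] (v : κ → R) {k : ι} {j : κ} (hkj : P k j) :
    (indicatorMatrix P *ᵥ v) k = v j := by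
  simp only [mulVec, dotProduct, indicatorMatrix, of_apply, ite_mul, one_mul, zero_mul]
  rw [sum_eq_single j (fun i _ hij => if_neg fun hki => hij (hP k i j hki hkj)) (by simp),
    if_pos hkj]

theorem transpose_indicatorMatrix_mul_self [Fintype ι] [DecidableEq κ] :
    (indicatorMatrix P : Matrix ι κ R)ᵀ * (indicatorMatrix P : Matrix ι κ R)
      = diagonal ((indicatorMatrix P : Matrix ι κ R)ᵀ *ᵥ 1) := by
  refine Matrix.ext fun i j => ?_
  simp only [Matrix.mul_apply, transpose_apply, indicatorMatrix, of_apply, ite_zero_mul_ite_zero,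
    mul_one, diagonal_apply, mulVec, dotProduct, Pi.one_apply]
  split_ifs with hij
  · simp only [hij, and_self]
  · exact sum_eq_zero fun k _ => if_neg fun h => hij (hP k i j h.1 h.2)

end

theorem Finset.sum_coe_sort_ite {α M : Type*} [AddCommMonoid M] (s : Finset α) (p : α → Prop)
    [DecidablePred p] (f : α → M) :
    ∑ k : s, (if p k then f k else 0) = ∑ k ∈ s.filter p, f k := by
  rw [Finset.sum_coe_sort s fun k => if p k then f k else 0, Finset.sum_filter]

/-- Poststratification as order-1 B-splines: with indicator basis functions and equal
inclusion probabilities, the B-spline weights are `N_j / n_j` and the resulting estimator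
is the classical poststratified estimator. -/
theorem stmt19 (Np q : ℕ) (J : Fin q → ℝ → Prop) [∀ j, DecidablePred (J j)]
    (z : Fin Np → ℝ) (hz : ∀ k, z k ∈ Set.Icc (0 : ℝ) 1)
    (hpart : ∀ x ∈ Set.Icc (0 : ℝ) 1, ∃! j, J j x)
    (s : Finset (Fin Np)) (π : ℝ) (hπ : 0 < π)
    (Bs : Matrix {k // k ∈ s} (Fin q) ℝ)
    (hBs : Bs = fun k j => if J j (z k.1) then 1 else 0)
    (BU : Matrix (Fin Np) (Fin q) ℝ)
    (hBU : BU = fun k j => if J j (z k) then 1 else 0)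
    (nj : Fin q → ℕ) (hnj : ∀ j, nj j = (s.filter fun k => J j (z k)).card)
    (hnjpos : ∀ j, 0 < nj j)
    (Nj : Fin q → ℕ)
    (hNj : ∀ j, Nj j = (Finset.univ.filter fun k : Fin Np => J j (z k)).card)
    (w : {k // k ∈ s} → ℝ)
    (hw : w = ((π • (1 : Matrix {k // k ∈ s} {k // k ∈ s} ℝ))⁻¹ * Bs *
        (Bsᵀ * (π • (1 : Matrix {k // k ∈ s} {k // k ∈ s} ℝ))⁻¹ * Bs)⁻¹ * BUᵀ).mulVec
        (fun _ => 1)) :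
    (∀ (k : {k // k ∈ s}) (j : Fin q), J j (z k.1) → w k = (Nj j : ℝ) / (nj j : ℝ)) ∧
      ∀ y : Fin Np → ℝ,
        (∑ k : {k // k ∈ s}, w k * y k.1)
          = ∑ j, ((Nj j : ℝ) / (nj j : ℝ)) * ∑ k ∈ s.filter (fun k => J j (z k)), y k := by
  have hstratum : ∀ (k : s) i j, J i (z k.1) → J j (z k.1) → i = j := fun k _ _ hi hj =>
    (hpart _ (hz k.1)).unique hi hj
  have hBs' : Bs = indicatorMatrix fun (k : s) j => J j (z k.1) := hBs
  have hBU' : BU = indicatorMatrix fun k j => J j (z k) := hBU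
  have hn : Bsᵀ *ᵥ 1 = fun j => (nj j : ℝ) := funext fun j => by
    rw [hBs', indicatorMatrix_transpose_mulVec, hnj, Finset.cast_card]
    exact Finset.sum_coe_sort_ite s (fun k => J j (z k)) 1
  have hN : (BUᵀ *ᵥ fun _ => 1) = fun j => (Nj j : ℝ) := funext fun j => by
    simp only [hBU', indicatorMatrix_transpose_mulVec, hNj, Finset.natCast_card_filter]
  have hgram : Bsᵀ * Bs = diagonal fun j => (nj j : ℝ) := by
    rw [← hn, hBs', transpose_indicatorMatrix_mul_self hstratum]
  have hw' : w = Bs *ᵥ fun j => (Nj j : ℝ) / nj j := by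
    rw [hw, inv_smul_one_mul_mul_inv_eq hπ.ne', hgram,
      inv_diagonal_of_ne_zero fun j => Nat.cast_ne_zero.mpr (hnjpos j).ne', ← mulVec_mulVec,
      ← mulVec_mulVec, hN]
    exact congrArg _ (funext fun j => by rw [mulVec_diagonal, div_eq_inv_mul])
  refine ⟨fun k j hj => ?_, fun y => ?_⟩
  · rw [hw', hBs', indicatorMatrix_mulVec_of hstratum _ hj]
  · rw [hw', hBs', sum_indicatorMatrix_mulVec_mul]
    exact Finset.sum_congr rfl fun j _ => by
      rw [Finset.sum_coe_sort_ite s (fun k => J j (z k)) y]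
end
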